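/- For all natural numbers l and m: max{ t ∈ ℕ : there exist l' ≤ l and m' ≤ m with l' + m' = t and C(t, l') odd } = l # m. -/

import Mathlib

/-- `l ⊥ m`: the binary expansions of `l` and `m` are disjoint. -/
def Perp (l m : ℕ) : Prop := ∀ i : ℕ, ¬(l.testBit i ∧ m.testBit i)

/-- The smallest `s` such that the binary digits of `l` and `m` are disjoint in
all positions `≥ s`. -/
noncomputable def hashS (l m : ℕ) : ℕ :=
  sInf {s : ℕ | ∀ r : ℕ, s ≤ r → ¬(l.testBit r ∧ m.testBit r)}

/-- `l # m = (Σ_{i≥s}[l]_i 2^i) + (Σ_{i≥s}[m]_i 2^i) + 2^s - 1`, where `s = hashS l m`;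
the truncation `Σ_{i≥s}[n]_i 2^i` equals `2^s * (n / 2^s)`. -/
noncomputable def hash (l m : ℕ) : ℕ :=
  2 ^ hashS l m * (l / 2 ^ hashS l m) + 2 ^ hashS l m * (m / 2 ^ hashS l m)
    + (2 ^ hashS l m - 1)

lemma perp_iff (a b : ℕ) :
    Perp a b ↔ (¬(a.testBit 0 ∧ b.testBit 0)) ∧ Perp (a / 2) (b / 2) := by
  constructor
  · intro h
    refine ⟨h 0, fun i => ?_⟩
    simpa [Nat.testBit_div_two] using h (i + 1)
  · rintro ⟨h0, h⟩ i
    cases i with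
    | zero => exact h0
    | succ i => simpa [Nat.testBit_div_two] using h i

lemma odd_choose_step (n k : ℕ) :
    Odd (n.choose k) ↔ Odd ((n % 2).choose (k % 2)) ∧ Odd ((n / 2).choose (k / 2)) := by
  haveI : Fact (Nat.Prime 2) := ⟨Nat.prime_two⟩
  have h := @Choose.choose_modEq_choose_mod_mul_choose_div_nat n k 2 _
  unfold Nat.ModEq at h
  rw [Nat.mul_mod] at h
  have h1 := Nat.mod_two_eq_zero_or_one (n.choose k)
  have h2 := Nat.mod_two_eq_zero_or_one ((n % 2).choose (k % 2))
  have h3 := Nat.mod_two_eq_zero_or_one ((n / 2).choose (k / 2))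
  simp only [Nat.odd_iff]
  rcases h2 with h2 | h2 <;> rcases h3 with h3 | h3 <;> rw [h2, h3] at h <;> omega

lemma odd_choose_iff : ∀ n a b : ℕ, a + b = n → (Odd ((a + b).choose a) ↔ Perp a b) := by
  intro n
  induction n using Nat.strong_induction_on with
  | _ n ih =>
    intro a b hab
    rcases Nat.eq_zero_or_pos n with hn | hn
    · have ha : a = 0 := by omega
      have hb : b = 0 := by omega
      subst ha hb
      simp only [Nat.choose_self]
      constructor
      · intro _ i
        simp
      · intro _; exact odd_one
    · rw [odd_choose_step, perp_iff]
      have hd : a / 2 + b / 2 < n := by omega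
      have key := ih _ hd (a / 2) (b / 2) rfl
      have ha2 := Nat.mod_two_eq_zero_or_one a
      have hb2 := Nat.mod_two_eq_zero_or_one b
      have htb : ∀ x : ℕ, x.testBit 0 = decide (x % 2 = 1) := fun x => Nat.testBit_zero x
      rcases ha2 with ha2 | ha2 <;> rcases hb2 with hb2 | hb2
      · have h1 : (a + b) % 2 = 0 := by omega
        have h2 : (a + b) / 2 = a / 2 + b / 2 := by omega
        rw [h1, ha2, h2, key, htb a, htb b, ha2]
        simp
      · have h1 : (a + b) % 2 = 1 := by omega
        have h2 : (a + b) / 2 = a / 2 + b / 2 := by omega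
        rw [h1, ha2, h2, key, htb a, ha2]
        simp
      · have h1 : (a + b) % 2 = 1 := by omega
        have h2 : (a + b) / 2 = a / 2 + b / 2 := by omega
        rw [h1, ha2, h2, key, htb b, hb2]
        simp
      · have h1 : (a + b) % 2 = 0 := by omega
        rw [h1, ha2, htb a, htb b, ha2, hb2]
        simp [Nat.choose_eq_zero_of_lt]

lemma perp_add_lt : ∀ s a b : ℕ, a < 2 ^ s → b < 2 ^ s → Perp a b → a + b < 2 ^ s := by
  intro s
  induction s with
  | zero => intro a b ha hb _; simp at ha hb; omega
  | succ s ih =>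
    intro a b ha hb h
    rw [perp_iff] at h
    have h1 : a / 2 < 2 ^ s := by rw [pow_succ] at ha; omega
    have h2 : b / 2 < 2 ^ s := by rw [pow_succ] at hb; omega
    have h3 := ih _ _ h1 h2 h.2
    have h0 := h.1
    rw [Nat.testBit_zero, Nat.testBit_zero] at h0
    simp only [decide_eq_true_eq] at h0
    have ha2 := Nat.mod_two_eq_zero_or_one a
    have hb2 := Nat.mod_two_eq_zero_or_one b
    rw [pow_succ]
    omega

lemma hashS_spec (l m : ℕ) : ∀ r : ℕ, hashS l m ≤ r → ¬(l.testBit r ∧ m.testBit r) := by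
  have hne : l ∈ {s : ℕ | ∀ r : ℕ, s ≤ r → ¬(l.testBit r ∧ m.testBit r)} := by
    intro r hr ⟨h1, _⟩
    have : l < 2 ^ r := lt_of_lt_of_le (Nat.lt_two_pow_self) (Nat.pow_le_pow_right (by norm_num) hr)
    rw [Nat.testBit_lt_two_pow this] at h1
    exact Bool.false_ne_true h1
  exact Nat.sInf_mem ⟨l, hne⟩

lemma hashS_min (l m k : ℕ) (hk : hashS l m = k + 1) :
    l.testBit k ∧ m.testBit k := by
  rw [hashS] at hk
  have hnot : k ∉ {s : ℕ | ∀ r : ℕ, s ≤ r → ¬(l.testBit r ∧ m.testBit r)} :=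
    Nat.notMem_of_lt_sInf (by omega)
  simp only [Set.mem_setOf_eq, not_forall] at hnot
  obtain ⟨r, hr, hb⟩ := hnot
  rw [not_not] at hb
  rcases Nat.lt_or_ge r (k + 1) with h | h
  · have : r = k := by omega
    rwa [this] at hb
  · exact absurd hb (hashS_spec l m r (by rw [hashS]; omega))

/-- The largest `t` for which there exist `l' ≤ l`, `m' ≤ m` with `l' + m' = t` and
`C(t, l')` odd equals `l # m`. -/
theorem stmt_19 (l m : ℕ) :
    sSup {t : ℕ | ∃ l' m' : ℕ, l' ≤ l ∧ m' ≤ m ∧ l' + m' = t ∧ Odd (Nat.choose t l')}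
      = hash l m := by
  set s := hashS l m with hs
  set S := {t : ℕ | ∃ l' m' : ℕ, l' ≤ l ∧ m' ≤ m ∧ l' + m' = t ∧ Odd (Nat.choose t l')} with hS
  have hbdd : ∀ t ∈ S, t ≤ l + m := by
    rintro t ⟨l', m', h1, h2, h3, _⟩; omega
  have hBdd : BddAbove S := ⟨l + m, fun t ht => hbdd t ht⟩
  apply le_antisymm
  · refine csSup_le ⟨0, ?_⟩ ?_
    · exact ⟨0, 0, Nat.zero_le _, Nat.zero_le _, rfl, by simpa using odd_one⟩
    rintro t ⟨l', m', h1, h2, h3, hodd⟩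
    subst h3
    have hperp : Perp l' m' := (odd_choose_iff _ l' m' rfl).mp hodd
    have hperp' : Perp (l' % 2 ^ s) (m' % 2 ^ s) := by
      intro i ⟨ha, hb⟩
      rw [Nat.testBit_mod_two_pow] at ha hb
      exact hperp i ⟨by simpa using (Bool.and_elim_right ha),
        by simpa using (Bool.and_elim_right hb)⟩
    have hlt := perp_add_lt s (l' % 2 ^ s) (m' % 2 ^ s)
      (Nat.mod_lt _ (Nat.two_pow_pos s))
      (Nat.mod_lt _ (Nat.two_pow_pos s)) hperp'
    have hdl : 2 ^ s * (l' / 2 ^ s) ≤ 2 ^ s * (l / 2 ^ s) :=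
      Nat.mul_le_mul_left _ (Nat.div_le_div_right h1)
    have hdm : 2 ^ s * (m' / 2 ^ s) ≤ 2 ^ s * (m / 2 ^ s) :=
      Nat.mul_le_mul_left _ (Nat.div_le_div_right h2)
    have el : 2 ^ s * (l' / 2 ^ s) + l' % 2 ^ s = l' := Nat.div_add_mod _ _
    have em : 2 ^ s * (m' / 2 ^ s) + m' % 2 ^ s = m' := Nat.div_add_mod _ _
    rw [_root_.hash, ← hs]
    omega
  · apply le_csSup hBdd
    rcases Nat.eq_zero_or_pos s with h0 | hpos
    · -- s = 0 : l ⊥ m and hash = l + m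
      have hperp : Perp l m := fun i => hashS_spec l m i (by omega)
      refine ⟨l, m, le_refl _, le_refl _, ?_, ?_⟩
      · rw [_root_.hash, ← hs, h0]; simp
      · rw [_root_.hash, ← hs, h0]
        simp only [pow_zero, Nat.div_one, one_mul]
        exact (odd_choose_iff _ l m rfl).mpr hperp
    · obtain ⟨k, hk⟩ : ∃ k, s = k + 1 := ⟨s - 1, by omega⟩
      obtain ⟨hlk, hmk⟩ := hashS_min l m k hk
      have hks : k < s := by omega
      have h2k : 2 ^ k < 2 ^ s := Nat.pow_lt_pow_right (by norm_num) hks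
      set l' := 2 ^ s * (l / 2 ^ s) + 2 ^ k with hl'
      set m' := 2 ^ s * (m / 2 ^ s) + (2 ^ k - 1) with hm'
      have hlmod : 2 ^ k ≤ l % 2 ^ s := by
        apply Nat.ge_two_pow_of_testBit
        rw [Nat.testBit_mod_two_pow]
        simp [hks, hlk]
      have hmmod : 2 ^ k ≤ m % 2 ^ s := by
        apply Nat.ge_two_pow_of_testBit
        rw [Nat.testBit_mod_two_pow]
        simp [hks, hmk]
      have el : 2 ^ s * (l / 2 ^ s) + l % 2 ^ s = l := Nat.div_add_mod _ _
      have em : 2 ^ s * (m / 2 ^ s) + m % 2 ^ s = m := Nat.div_add_mod _ _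
      have hsum : l' + m' = hash l m := by
        rw [_root_.hash, ← hs, hl', hm']
        have : 2 ^ s = 2 * 2 ^ k := by rw [hk, pow_succ]; ring
        omega
      have hperp : Perp l' m' := by
        intro i ⟨ha, hb⟩
        rw [hl', Nat.testBit_two_pow_mul_add _ h2k] at ha
        rw [hm', Nat.testBit_two_pow_mul_add _ (by omega)] at hb
        rcases Nat.lt_or_ge i s with hi | hi
        · rw [if_pos hi] at ha hb
          rw [Nat.testBit_two_pow] at ha
          rw [Nat.testBit_two_pow_sub_one] at hb
          simp only [decide_eq_true_eq] at ha hb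
          omega
        · rw [if_neg (by omega)] at ha hb
          have hdiv : ∀ x : ℕ, (x / 2 ^ s).testBit (i - s) = x.testBit i := by
            intro x
            rw [← Nat.shiftRight_eq_div_pow, Nat.testBit_shiftRight]
            congr 1; omega
          rw [hdiv] at ha hb
          exact hashS_spec l m i (by omega) ⟨ha, hb⟩
      exact ⟨l', m', by omega, by omega, hsum,
        hsum ▸ ((odd_choose_iff _ l' m' rfl).mpr hperp)⟩
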